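/- Let A be a commutative algebra, M(A) the set of multiplicative maps A → A, E(A) the set of idempotents, and M(A)⋉E(A) the set of equivalence classes [φ, e] of pairs with φ|_{Ae} : Ae → Aφ(e) bijective (where (φ,e) ∼ (ψ,f) iff e = f and φ|_{Ae} = ψ|_{Ae}). Then M(A)⋉E(A) is a regular monoid under the product [φ,e][ψ,f] = [φ∘ψ, ψ^{-1}(e·ψ(f))], with unit [id, 1_A] and pseudo-inverse [φ,e]* = [φ^{-1}, φ(e)]. -/

import Mathlib

/-- The unital ideal `A·e` generated by an element `e` of a commutative ring. -/
def idealOf {A : Type*} [CommRing A] (e : A) : Set A := Set.range (fun a => a * e)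

/-- `φ : A → A` is multiplicative. -/
def Mult {A : Type*} [CommRing A] (φ : A → A) : Prop := ∀ x y : A, φ (x * y) = φ x * φ y

/-- `(φ, e)` represents an element of `M(A) ⋉ E(A)`: `φ` is multiplicative, `e` is
idempotent, and `φ` restricts to a bijection `Ae → Aφ(e)`. -/
def GoodPair {A : Type*} [CommRing A] (φ : A → A) (e : A) : Prop :=
  Mult φ ∧ e * e = e ∧ Set.BijOn φ (idealOf e) (idealOf (φ e))

/-- The equivalence relation on pairs: `(φ,e) ∼ (ψ,f)` iff `e = f` and
`φ|_{Ae} = ψ|_{Ae}`. -/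
def PairRel {A : Type*} [CommRing A] (φ : A → A) (e : A) (ψ : A → A) (f : A) : Prop :=
  e = f ∧ Set.EqOn φ ψ (idealOf e)


/-!
For an idempotent `g ∈ Ae` we have `Ag ⊆ Ae`, and a multiplicative `φ` that is bijective
`Ae → Aφ(e)` stays bijective `Ag → Aφ(g)`. Every identity between classes then reduces to the
injectivity of one such restriction. The representative `g ∈ Af` of `ψ⁻¹(e·ψ(f))` is unique
since `ψ` is injective on `Af`, and idempotent since `ψ(g²) = (e·ψ(f))² = ψ(g)`; as
`ψ(g) ∈ Ae`, the composite `φ ∘ ψ` is bijective `Ag → Aψ(g) → Aφ(ψ(g))`.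
-/

section

variable {A : Type*} [CommRing A] {φ φ' ψ ψ' χ : A → A} {e f g g' g₁ g₂ g₃ g₄ h x : A}

lemma mul_mem_idealOf (a e : A) : a * e ∈ idealOf e := ⟨a, rfl⟩

lemma self_mem_idealOf (he : e * e = e) : e ∈ idealOf e := ⟨e, he⟩

lemma idealOf_subset_of_mem (hg : g ∈ idealOf e) : idealOf g ⊆ idealOf e := by
  rintro x ⟨a, rfl⟩
  obtain ⟨b, rfl⟩ := hg
  exact ⟨a * b, mul_assoc a b e⟩

lemma mul_mem_idealOf_of_mem (hg : g ∈ idealOf e) (a : A) : g * a ∈ idealOf e := by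
  obtain ⟨b, rfl⟩ := hg
  exact ⟨b * a, (mul_right_comm b e a).symm⟩

lemma mem_idealOf_of_eq_mul {a : A} (hg : g = e * a) : g ∈ idealOf e :=
  hg ▸ ⟨a, mul_comm a e⟩

lemma Mult.comp (hφ : Mult φ) (hψ : Mult ψ) : Mult (φ ∘ ψ) := fun x y => by
  simp only [Function.comp_apply, hψ x y, hφ (ψ x) (ψ y)]

lemma Mult.mapsTo_idealOf (hφ : Mult φ) (e : A) :
    Set.MapsTo φ (idealOf e) (idealOf (φ e)) := by
  rintro _ ⟨a, rfl⟩
  exact ⟨φ a, (hφ a e).symm⟩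

lemma Mult.map_idem (hφ : Mult φ) (hg : g * g = g) : φ g * φ g = φ g := by
  rw [← hφ, hg]

lemma Mult.map_mem_idealOf (hφ : Mult φ) (hx : x ∈ idealOf g) (hg : φ g ∈ idealOf e) :
    φ x ∈ idealOf e :=
  idealOf_subset_of_mem hg (hφ.mapsTo_idealOf g hx)

lemma goodPair_id_one : GoodPair (id : A → A) 1 :=
  ⟨fun _ _ => rfl, one_mul 1, Set.bijOn_id _⟩

lemma GoodPair.injOn (hφ : GoodPair φ e) : Set.InjOn φ (idealOf e) := hφ.2.2.injOn

lemma GoodPair.of_mem (hφ : GoodPair φ e) (hg : g ∈ idealOf e) (hgg : g * g = g) :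
    GoodPair φ g := by
  obtain ⟨hφm, -, hφb⟩ := hφ
  refine ⟨hφm, hgg, hφm.mapsTo_idealOf g, hφb.injOn.mono (idealOf_subset_of_mem hg), ?_⟩
  rintro _ ⟨b, rfl⟩
  obtain ⟨x, hx, hφx⟩ := hφb.surjOn (mul_mem_idealOf_of_mem (hφm.mapsTo_idealOf e hg) b)
  refine ⟨x * g, mul_mem_idealOf x g, ?_⟩
  rw [hφm x g, hφx, mul_right_comm, hφm.map_idem hgg, mul_comm]

lemma GoodPair.comp (hφ : GoodPair φ e) (hψ : GoodPair ψ g) (hg : ψ g ∈ idealOf e) :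
    GoodPair (φ ∘ ψ) g :=
  ⟨hφ.1.comp hψ.1, hψ.2.1, (hφ.of_mem hg (hψ.1.map_idem hψ.2.1)).2.2.comp hψ.2.2⟩

lemma GoodPair.idem_of_map_eq_mul (hψ : GoodPair ψ f) (he : e * e = e) (hg : g ∈ idealOf f)
    (hψg : ψ g = e * ψ f) : g * g = g := by
  refine hψ.injOn (idealOf_subset_of_mem hg (mul_mem_idealOf g g)) hg ?_
  calc ψ (g * g) = (e * e) * (ψ f * ψ f) := by rw [hψ.1, hψg]; ring
    _ = ψ g := by rw [he, hψ.1.map_idem hψ.2.1, hψg]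

lemma GoodPair.mul (hφ : GoodPair φ e) (hψ : GoodPair ψ f) (hg : g ∈ idealOf f)
    (hψg : ψ g = e * ψ f) : GoodPair (φ ∘ ψ) g :=
  hφ.comp (hψ.of_mem hg (hψ.idem_of_map_eq_mul hφ.2.1 hg hψg)) (mem_idealOf_of_eq_mul hψg)

lemma pairRel_comp (hψ : GoodPair ψ f) (hφφ' : Set.EqOn φ φ' (idealOf e))
    (hψψ' : Set.EqOn ψ ψ' (idealOf f)) (hg : g ∈ idealOf f) (hψg : ψ g = e * ψ f)
    (hg' : g' ∈ idealOf f) (hψg' : ψ' g' = e * ψ' f) : PairRel (φ ∘ ψ) g (φ' ∘ ψ') g' := by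
  refine ⟨hψ.injOn hg hg' ?_, fun x hx => ?_⟩
  · rw [hψg, hψψ' (self_mem_idealOf hψ.2.1), hψψ' hg', hψg']
  · have hψx : ψ x ∈ idealOf e := hψ.1.map_mem_idealOf hx (mem_idealOf_of_eq_mul hψg)
    simp only [Function.comp_apply, ← hψψ' (idealOf_subset_of_mem hg hx), hφφ' hψx]

/-- Both `(xy)z` and `x(yz)` carry the idempotent `g` with `ψ(χ(g)) = e·ψ(f)·ψ(χ(h))`. -/
lemma GoodPair.eq_of_assoc (hψ : GoodPair ψ f) (hχ : GoodPair χ h) (hg₁ : g₁ ∈ idealOf f)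
    (hψg₁ : ψ g₁ = e * ψ f) (hg₂ : g₂ ∈ idealOf h) (hχg₂ : χ g₂ = g₁ * χ h)
    (hg₃ : g₃ ∈ idealOf h) (hχg₃ : χ g₃ = f * χ h) (hg₄ : g₄ ∈ idealOf g₃)
    (hψχg₄ : ψ (χ g₄) = e * ψ (χ g₃)) : g₂ = g₄ := by
  have hχg₂f : χ g₂ ∈ idealOf f := hχg₂ ▸ mul_mem_idealOf_of_mem hg₁ (χ h)
  have hχg₄f : χ g₄ ∈ idealOf f :=
    hχ.1.map_mem_idealOf hg₄ (mem_idealOf_of_eq_mul hχg₃)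
  refine hχ.injOn hg₂ (idealOf_subset_of_mem hg₃ hg₄) (hψ.injOn hχg₂f hχg₄f ?_)
  rw [hχg₂, hψχg₄, hψ.1, hψg₁, hχg₃, hψ.1, mul_assoc]

lemma GoodPair.inv (hφ : GoodPair φ e) (hψ : Mult ψ) (hψφ : ∀ x ∈ idealOf e, ψ (φ x) = x)
    (hφψ : ∀ y ∈ idealOf (φ e), φ (ψ y) = y) : GoodPair ψ (φ e) := by
  refine ⟨hψ, hφ.1.map_idem hφ.2.1, ?_⟩
  rw [hψφ e (self_mem_idealOf hφ.2.1)]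
  exact hφ.2.2.symm ⟨hφψ, hψφ⟩

end

/-- A representative of `ψ⁻¹(e·ψ(f))` is any `g ∈ Af` with `ψ(g) = e·ψ(f)`; a representative
of `φ⁻¹` is any multiplicative `ψ` inverting `φ` between `Ae` and `Aφ(e)`. -/
theorem MA_semidirect_EA_regular_monoid {A : Type*} [CommRing A] :
    -- closure of the product
    (∀ (φ : A → A) (e : A) (ψ : A → A) (f g : A), GoodPair φ e → GoodPair ψ f →
      g ∈ idealOf f → ψ g = e * ψ f → GoodPair (φ ∘ ψ) g) ∧
    -- the product is well defined on equivalence classes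
    (∀ (φ φ' ψ ψ' : A → A) (e e' f f' g g' : A),
      GoodPair φ e → GoodPair φ' e' → GoodPair ψ f → GoodPair ψ' f' →
      PairRel φ e φ' e' → PairRel ψ f ψ' f' →
      g ∈ idealOf f → ψ g = e * ψ f →
      g' ∈ idealOf f' → ψ' g' = e' * ψ' f' →
      PairRel (φ ∘ ψ) g (φ' ∘ ψ') g') ∧
    -- associativity up to the equivalence
    (∀ (φ ψ χ : A → A) (e f h g₁ g₂ g₃ g₄ : A),
      GoodPair φ e → GoodPair ψ f → GoodPair χ h →
      g₁ ∈ idealOf f → ψ g₁ = e * ψ f →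
      g₂ ∈ idealOf h → χ g₂ = g₁ * χ h →
      g₃ ∈ idealOf h → χ g₃ = f * χ h →
      g₄ ∈ idealOf g₃ → ψ (χ g₄) = e * ψ (χ g₃) →
      PairRel ((φ ∘ ψ) ∘ χ) g₂ (φ ∘ (ψ ∘ χ)) g₄) ∧
    -- [id, 1] is a good pair and a two-sided unit
    GoodPair (id : A → A) 1 ∧
    (∀ (φ : A → A) (e : A), GoodPair φ e →
      PairRel (φ ∘ (id : A → A)) e φ e ∧
      (∀ g : A, g ∈ idealOf e → φ g = 1 * φ e → PairRel ((id : A → A) ∘ φ) g φ e)) ∧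
    -- pseudo-inverses: [φ,e]* = [φ⁻¹, φ(e)]
    (∀ (φ ψ : A → A) (e : A), GoodPair φ e → Mult ψ →
      (∀ x ∈ idealOf e, ψ (φ x) = x) → (∀ y ∈ idealOf (φ e), φ (ψ y) = y) →
      GoodPair ψ (φ e) ∧
      PairRel (fun a => φ (ψ (φ a))) e φ e ∧
      PairRel (fun a => ψ (φ (ψ a))) (φ e) ψ (φ e)) := by
  refine ⟨fun _ _ _ _ _ hφ hψ hg hψg => hφ.mul hψ hg hψg, ?_, ?_, goodPair_id_one, ?_, ?_⟩
  · rintro φ φ' ψ ψ' e e' f f' g g' - - hψ - hφφ' hψψ' hg hψg hg' hψg'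
    obtain ⟨rfl, hφφ'⟩ := hφφ'
    obtain ⟨rfl, hψψ'⟩ := hψψ'
    exact pairRel_comp hψ hφφ' hψψ' hg hψg hg' hψg'
  · intro φ ψ χ e f h g₁ g₂ g₃ g₄ _ hψ hχ hg₁ hψg₁ hg₂ hχg₂ hg₃ hχg₃ hg₄ hψχg₄
    exact ⟨hψ.eq_of_assoc hχ hg₁ hψg₁ hg₂ hχg₂ hg₃ hχg₃ hg₄ hψχg₄, Set.eqOn_refl _ _⟩
  · refine fun φ e hφ => ⟨⟨rfl, Set.eqOn_refl _ _⟩, fun g hg hφg => ⟨?_, Set.eqOn_refl _ _⟩⟩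
    exact hφ.injOn hg (self_mem_idealOf hφ.2.1) (hφg.trans (one_mul _))
  · intro φ ψ e hφ hψ hψφ hφψ
    exact ⟨hφ.inv hψ hψφ hφψ, ⟨rfl, fun x hx => hφψ _ (hφ.1.mapsTo_idealOf e hx)⟩,
      ⟨rfl, fun y hy => congrArg ψ (hφψ y hy)⟩⟩
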